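/- Let n ≥ 1, let X ⊂ ℝⁿ be a finite point cloud, let V be a box in ℝⁿ all of whose interval endpoints are integers, let π be a positive integer, α ∈ [0,1], and N = B(V, π). If M̄ is a largest pixel-optimal solution in s̄ol_α(V, N), then every unit pixel σ whose centroid m_σ lies in M̄ satisfies σ ⊆ M̄; equivalently, every pixel meeting M̄ either is entirely contained in M̄ or has its centroid outside M̄. -/
import Mathlib


open scoped Classical

noncomputable section

namespace BoxFiltration

variable {n : ℕ}

/-- `(l, u)` determines a box `∏ i, [l i, u i]` when `l i ≤ u i` for all `i`. -/
def IsBox (l u : Fin n → ℝ) : Prop := ∀ i, l i ≤ u i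

/-- The set of points of the box `∏ i, [l i, u i]`. -/
def boxSet (l u : Fin n → ℝ) : Set (Fin n → ℝ) := {x | ∀ i, l i ≤ x i ∧ x i ≤ u i}

/-- Total width `|V| = ∑ i, (u i - l i)`. -/
def width (l u : Fin n → ℝ) : ℝ := ∑ i, (u i - l i)

/-- Box containment: the box `(l, u)` is contained in the box `(L, U)`. -/
def BoxLE (l u L U : Fin n → ℝ) : Prop := ∀ i, L i ≤ l i ∧ u i ≤ U i

/-- Open π-neighborhood `B(V, π) = ∏ i, (l i - π, u i + π)`. -/
def nbhd (l u : Fin n → ℝ) (π : ℝ) : Set (Fin n → ℝ) :=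
  {x | ∀ i, l i - π < x i ∧ x i < u i + π}

/-- Weight of a point `x` w.r.t. the box `(l, u)`:
`w_V(x) = min {0, min_i (x i - l i), min_i (u i - x i)}`. -/
def weight (l u x : Fin n → ℝ) : ℝ :=
  min 0 (sInf (Set.range fun i => min (x i - l i) (u i - x i)))

/-- Point-cover cost `C_α(V, N) = -α ∑_{x ∈ N} w_V(x) + (1 - α)|V|`. -/
def cost (α : ℝ) (l u : Fin n → ℝ) (N : Finset (Fin n → ℝ)) : ℝ :=
  -α * ∑ x ∈ N, weight l u x + (1 - α) * width l u

/-- Neighborhood point set `N = X ∩ B(V, π)`. -/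
def nbhdPts (X : Finset (Fin n → ℝ)) (l u : Fin n → ℝ) (π : ℝ) : Finset (Fin n → ℝ) :=
  X.filter (fun x => x ∈ nbhd l u π)

/-- `(l', u') ∈ sol_α(V, N)`: `(l', u')` is a box containing `V = (l, u)` of minimal cost. -/
def OptSol (α : ℝ) (l u : Fin n → ℝ) (N : Finset (Fin n → ℝ)) (l' u' : Fin n → ℝ) : Prop :=
  IsBox l' u' ∧ BoxLE l u l' u' ∧
    ∀ l'' u'', IsBox l'' u'' → BoxLE l u l'' u'' → cost α l' u' N ≤ cost α l'' u'' N

/-- A largest optimal solution contains every optimal solution. -/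
def LargestOptSol (α : ℝ) (l u : Fin n → ℝ) (N : Finset (Fin n → ℝ)) (l' u' : Fin n → ℝ) :
    Prop :=
  OptSol α l u N l' u' ∧ ∀ l'' u'', OptSol α l u N l'' u'' → BoxLE l'' u'' l' u'

end BoxFiltration

namespace BoxFiltration

variable {n : ℕ}

/-- The unit pixel containing `x`: the pixel with integer base point `fun i => ⌊x i⌋`
(pixels are taken half-open, so each point lies in exactly one pixel). -/
def pixelOf (x : Fin n → ℝ) : Fin n → ℤ := fun i => ⌊x i⌋

/-- The (half-open) unit pixel with base point `k : Fin n → ℤ`. -/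
def pixelSet (k : Fin n → ℤ) : Set (Fin n → ℝ) :=
  {x | ∀ i, (k i : ℝ) ≤ x i ∧ x i < (k i : ℝ) + 1}

/-- The closed unit pixel (cube) with base point `k`. -/
def closedPixelSet (k : Fin n → ℤ) : Set (Fin n → ℝ) :=
  {x | ∀ i, (k i : ℝ) ≤ x i ∧ x i ≤ (k i : ℝ) + 1}

/-- The centroid `m_σ` of the unit pixel with base point `k`. -/
def centroid (k : Fin n → ℤ) : Fin n → ℝ := fun i => (k i : ℝ) + 1 / 2

/-- `θ(σ)`: the number of points of `X` in the unit pixel with base point `k`. -/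
def theta (X : Finset (Fin n → ℝ)) (k : Fin n → ℤ) : ℕ :=
  (X.filter fun x => pixelOf x = k).card

/-- `Θ(N)`: the pixels `σ` with `m_σ ∈ N` and `θ(σ) ≠ 0`. -/
def Theta (X : Finset (Fin n → ℝ)) (N : Set (Fin n → ℝ)) : Finset (Fin n → ℤ) :=
  (X.image pixelOf).filter fun k => centroid k ∈ N

/-- Pixel weight of a pixel with centroid `m` w.r.t. the box `(l, u)`:
`w̄_V(σ) = min {1/2, min_i (m i - l i), min_i (u i - m i)}`. -/
def pweight (l u m : Fin n → ℝ) : ℝ :=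
  min (1 / 2) (sInf (Set.range fun i => min (m i - l i) (u i - m i)))

/-- Pixel cost `C̄_α(V, N) = -α ∑_{σ ∈ Θ(N)} θ(σ) w̄_V(σ) + (1 - α)|V|`. -/
def pcost (α : ℝ) (l u : Fin n → ℝ) (X : Finset (Fin n → ℝ)) (N : Set (Fin n → ℝ)) : ℝ :=
  -α * ∑ k ∈ Theta X N, (theta X k : ℝ) * pweight l u (centroid k) +
    (1 - α) * width l u

/-- `(l', u') ∈ s̄ol_α(V, N)`: pixel-optimal solution for input box `V = (l, u)`. -/
def POptSol (α : ℝ) (l u : Fin n → ℝ) (X : Finset (Fin n → ℝ)) (N : Set (Fin n → ℝ))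
    (l' u' : Fin n → ℝ) : Prop :=
  IsBox l' u' ∧ BoxLE l u l' u' ∧
    ∀ l'' u'', IsBox l'' u'' → BoxLE l u l'' u'' →
      pcost α l' u' X N ≤ pcost α l'' u'' X N

/-- A largest pixel-optimal solution contains every pixel-optimal solution. -/
def LargestPOptSol (α : ℝ) (l u : Fin n → ℝ) (X : Finset (Fin n → ℝ))
    (N : Set (Fin n → ℝ)) (l' u' : Fin n → ℝ) : Prop :=
  POptSol α l u X N l' u' ∧ ∀ l'' u'', POptSol α l u X N l'' u'' → BoxLE l'' u'' l' u'

/-- Rounding `ψ_r` applied to a lower endpoint, for `r = 1, 2, 3`. -/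
def psil : ℕ → ℝ → ℝ
  | 1 => fun t => (⌈t⌉ : ℝ)
  | 2 => fun t =>
      if 1 / 2 < Int.fract t then (⌈t⌉ : ℝ)
      else if 0 < Int.fract t then (⌊t⌋ : ℝ) + 1 / 2
      else t
  | _ => fun t => if 1 / 2 < Int.fract t then (⌈t⌉ : ℝ) else (⌊t⌋ : ℝ)

/-- Rounding `ψ_r` applied to an upper endpoint, for `r = 1, 2, 3`. -/
def psiu : ℕ → ℝ → ℝ
  | 1 => fun t => (⌊t⌋ : ℝ)
  | 2 => fun t => if 1 / 2 ≤ Int.fract t then (⌊t⌋ : ℝ) + 1 / 2 else (⌊t⌋ : ℝ)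
  | _ => fun t => if 1 / 2 ≤ Int.fract t then (⌈t⌉ : ℝ) else (⌊t⌋ : ℝ)

end BoxFiltration
namespace BF12

open BoxFiltration Finset

variable {n : ℕ}

/-- Lower endpoints of the deformed box: bad-lower coordinates (those with
`Int.fract (Ml i) = δ`) are set to `⌊Ml i⌋ + s`. -/
def Lb (Ml : Fin n → ℝ) (δ s : ℝ) : Fin n → ℝ :=
  fun i => if Int.fract (Ml i) = δ then (⌊Ml i⌋ : ℝ) + s else Ml i

/-- Upper endpoints of the deformed box. -/
def Ub (Mu : Fin n → ℝ) (δ s : ℝ) : Fin n → ℝ :=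
  fun i => if Int.fract (Mu i) = 1 - δ then (⌈Mu i⌉ : ℝ) - s else Mu i

/-- The moving sides. -/
def mov (Ml Mu : Fin n → ℝ) (δ : ℝ) : Finset (Fin n ⊕ Fin n) :=
  Finset.univ.filter
    (Sum.elim (fun i => Int.fract (Ml i) = δ) (fun i => Int.fract (Mu i) = 1 - δ))

/-- The value of a side-term of the pixel weight at deformation parameter `s`. -/
def sval (Ml Mu : Fin n → ℝ) (δ : ℝ) (m : Fin n → ℝ) (s : ℝ) : (Fin n ⊕ Fin n) → ℝ :=
  Sum.elim (fun j => m j - Lb Ml δ s j) (fun j => Ub Mu δ s j - m j)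

lemma sval_mov {Ml Mu : Fin n → ℝ} {δ : ℝ} {m : Fin n → ℝ} {e : Fin n ⊕ Fin n}
    (he : e ∈ mov Ml Mu δ) (s : ℝ) :
    sval Ml Mu δ m s e = sval Ml Mu δ m 0 e - s := by
  have := (Finset.mem_filter.mp he).2
  cases e with
  | inl j => simp only [Sum.elim_inl] at this
             simp [sval, Lb, this]; ring
  | inr j => simp only [Sum.elim_inr] at this
             simp [sval, Ub, this]; ring

lemma sval_nonmov {Ml Mu : Fin n → ℝ} {δ : ℝ} {m : Fin n → ℝ} {e : Fin n ⊕ Fin n}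
    (he : e ∉ mov Ml Mu δ) (s : ℝ) :
    sval Ml Mu δ m s e = sval Ml Mu δ m 0 e := by
  have : ¬ (Sum.elim (fun i => Int.fract (Ml i) = δ)
      (fun i => Int.fract (Mu i) = 1 - δ) e) := by
    intro h; exact he (Finset.mem_filter.mpr ⟨Finset.mem_univ _, h⟩)
  cases e with
  | inl j => simp only [Sum.elim_inl] at this
             simp [sval, Lb, this]
  | inr j => simp only [Sum.elim_inr] at this
             simp [sval, Ub, this]

/-- `A`: minimum over the moving sides of the base values (at `s = 0`). -/
def Aval (Ml Mu : Fin n → ℝ) (δ : ℝ) (m : Fin n → ℝ) (h : (mov Ml Mu δ).Nonempty) : ℝ :=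
  ((mov Ml Mu δ).image (sval Ml Mu δ m 0)).min' (h.image _)

/-- `C`: minimum of `1/2` and the non-moving side values. -/
def Cval (Ml Mu : Fin n → ℝ) (δ : ℝ) (m : Fin n → ℝ) : ℝ :=
  (insert (1/2 : ℝ) (((mov Ml Mu δ)ᶜ).image (sval Ml Mu δ m 0))).min'
    (Finset.insert_nonempty _ _)

lemma pweight_eq (hn : 1 ≤ n) (Ml Mu : Fin n → ℝ) (δ : ℝ) (m : Fin n → ℝ)
    (h : (mov Ml Mu δ).Nonempty) (s : ℝ) :
    pweight (Lb Ml δ s) (Ub Mu δ s) m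
      = min (Aval Ml Mu δ m h - s) (Cval Ml Mu δ m) := by
  have hfin : Nonempty (Fin n) := ⟨⟨0, hn⟩⟩
  have hbdd : ∀ (g : Fin n ⊕ Fin n → ℝ), BddBelow (Set.range g) :=
    fun g => (Set.finite_range g).bddBelow
  have hbdd' : ∀ (g : Fin n → ℝ), BddBelow (Set.range g) :=
    fun g => (Set.finite_range g).bddBelow
  have hrange : sInf (Set.range fun i => min (m i - Lb Ml δ s i) (Ub Mu δ s i - m i))
      = sInf (Set.range (sval Ml Mu δ m s)) := by
    apply le_antisymm
    · refine le_csInf (Set.range_nonempty _) ?_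
      rintro x ⟨e, rfl⟩
      cases e with
      | inl j =>
          exact (csInf_le (hbdd' _) ⟨j, rfl⟩).trans (min_le_left _ _)
      | inr j =>
          exact (csInf_le (hbdd' _) ⟨j, rfl⟩).trans (min_le_right _ _)
    · refine le_csInf (Set.range_nonempty _) ?_
      rintro x ⟨j, rfl⟩
      exact le_min (csInf_le (hbdd _) ⟨Sum.inl j, rfl⟩)
        (csInf_le (hbdd _) ⟨Sum.inr j, rfl⟩)
  unfold pweight
  rw [hrange]
  apply le_antisymm
  · refine le_min ?_ ?_
    · obtain ⟨e₀, he₀, hv⟩ := Finset.mem_image.mp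
        (Finset.min'_mem _ (h.image (sval Ml Mu δ m 0)))
      have : sval Ml Mu δ m s e₀ = Aval Ml Mu δ m h - s := by
        rw [sval_mov he₀, hv]; rfl
      calc min (1/2) (sInf (Set.range (sval Ml Mu δ m s)))
          ≤ sInf (Set.range (sval Ml Mu δ m s)) := min_le_right _ _
        _ ≤ sval Ml Mu δ m s e₀ := csInf_le (hbdd _) ⟨e₀, rfl⟩
        _ = _ := this
    · have hC := Finset.min'_mem (insert (1/2 : ℝ)
        (((mov Ml Mu δ)ᶜ).image (sval Ml Mu δ m 0))) (Finset.insert_nonempty _ _)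
      rcases Finset.mem_insert.mp hC with hC | hC
      · calc min (1/2) (sInf (Set.range (sval Ml Mu δ m s)))
            ≤ 1/2 := min_le_left _ _
          _ = Cval Ml Mu δ m := hC.symm
      · obtain ⟨e₁, he₁, hv⟩ := Finset.mem_image.mp hC
        have hni : e₁ ∉ mov Ml Mu δ := Finset.mem_compl.mp he₁
        calc min (1/2) (sInf (Set.range (sval Ml Mu δ m s)))
            ≤ sInf (Set.range (sval Ml Mu δ m s)) := min_le_right _ _
          _ ≤ sval Ml Mu δ m s e₁ := csInf_le (hbdd _) ⟨e₁, rfl⟩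
          _ = Cval Ml Mu δ m := by rw [sval_nonmov hni, hv]; rfl
  · refine le_min ?_ ?_
    · exact (min_le_right _ _).trans
        (Finset.min'_le _ _ (Finset.mem_insert_self _ _))
    · refine le_csInf (Set.range_nonempty _) ?_
      rintro x ⟨e, rfl⟩
      by_cases he : e ∈ mov Ml Mu δ
      · have hA : Aval Ml Mu δ m h ≤ sval Ml Mu δ m 0 e :=
          Finset.min'_le _ _ (Finset.mem_image_of_mem _ he)
        calc min (Aval Ml Mu δ m h - s) (Cval Ml Mu δ m)
            ≤ Aval Ml Mu δ m h - s := min_le_left _ _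
          _ ≤ sval Ml Mu δ m 0 e - s := by linarith
          _ = sval Ml Mu δ m s e := (sval_mov he s).symm
      · have hC : Cval Ml Mu δ m ≤ sval Ml Mu δ m 0 e :=
          Finset.min'_le _ _ (Finset.mem_insert_of_mem
            (Finset.mem_image_of_mem _ (Finset.mem_compl.mpr he)))
        calc min (Aval Ml Mu δ m h - s) (Cval Ml Mu δ m)
            ≤ Cval Ml Mu δ m := min_le_right _ _
          _ ≤ sval Ml Mu δ m 0 e := hC
          _ = sval Ml Mu δ m s e := (sval_nonmov he s).symm

end BF12
namespace BF12

open BoxFiltration Finset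

variable {n : ℕ}

lemma Aval_half {Ml Mu : Fin n → ℝ} {δ : ℝ} {m : Fin n → ℝ}
    (hm : ∀ j, ∃ z : ℤ, m j = (z : ℝ) + 1/2) (h : (mov Ml Mu δ).Nonempty) :
    ∃ z : ℤ, Aval Ml Mu δ m h = (z : ℝ) + 1/2 := by
  obtain ⟨e₀, he₀, hv⟩ := Finset.mem_image.mp
    (Finset.min'_mem _ (h.image (sval Ml Mu δ m 0)))
  have hc := (Finset.mem_filter.mp he₀).2
  cases e₀ with
  | inl j =>
      obtain ⟨z, hz⟩ := hm j
      simp only [Sum.elim_inl] at hc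
      refine ⟨z - ⌊Ml j⌋, ?_⟩
      rw [Aval, ← hv]
      simp [sval, Lb, hc, hz]
      push_cast
      ring
  | inr j =>
      obtain ⟨z, hz⟩ := hm j
      simp only [Sum.elim_inr] at hc
      refine ⟨⌈Mu j⌉ - z - 1, ?_⟩
      rw [Aval, ← hv]
      simp [sval, Ub, hc, hz]
      push_cast
      ring

lemma dicho {Ml Mu : Fin n → ℝ} {m : Fin n → ℝ}
    (hm : ∀ j, ∃ z : ℤ, m j = (z : ℝ) + 1/2)
    {δ κ : ℝ} (hδ0 : 0 < δ) (hκ1 : κ ≤ 1) (hδκ : δ < κ)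
    (h : (mov Ml Mu δ).Nonempty)
    (hkL : ∀ c, Int.fract (Ml c) ≠ δ → 0 < Int.fract (Ml c) →
      Int.fract (Ml c) < κ → False)
    (hkU : ∀ c, Int.fract (Mu c) ≠ 1 - δ → Int.fract (Mu c) ≠ 0 →
      1 - Int.fract (Mu c) < κ → False) :
    Aval Ml Mu δ m h ≤ Cval Ml Mu δ m ∨ Cval Ml Mu δ m ≤ Aval Ml Mu δ m h - κ := by
  by_contra hcon
  push_neg at hcon
  obtain ⟨h1, h2⟩ := hcon
  obtain ⟨zA, hzA⟩ := Aval_half hm h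
  have hs₀pos : 0 < Aval Ml Mu δ m h - Cval Ml Mu δ m := by linarith
  have hs₀κ : Aval Ml Mu δ m h - Cval Ml Mu δ m < κ := by linarith
  have hs₀1 : Aval Ml Mu δ m h - Cval Ml Mu δ m < 1 := lt_of_lt_of_le hs₀κ hκ1
  have hCmem : Cval Ml Mu δ m ∈ insert (1/2 : ℝ)
      (((mov Ml Mu δ)ᶜ).image (sval Ml Mu δ m 0)) := by
    rw [Cval]; exact Finset.min'_mem _ _
  rcases Finset.mem_insert.mp hCmem with hC2 | hC2
  · -- C = 1/2 : then s₀ = zA is an integer in (0, 1)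
    have heq : Aval Ml Mu δ m h - Cval Ml Mu δ m = (zA : ℝ) := by
      rw [hzA, hC2]; ring
    rw [heq] at hs₀pos hs₀1
    have h1' : (1 : ℤ) ≤ zA := by exact_mod_cast hs₀pos
    have : (1:ℝ) ≤ (zA : ℝ) := by exact_mod_cast h1'
    linarith
  · obtain ⟨e₁, he₁, hv⟩ := Finset.mem_image.mp hC2
    have hni : e₁ ∉ mov Ml Mu δ := Finset.mem_compl.mp he₁
    have hnc : ¬ (Sum.elim (fun i => Int.fract (Ml i) = δ)
        (fun i => Int.fract (Mu i) = 1 - δ) e₁) := by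
      intro hh; exact hni (Finset.mem_filter.mpr ⟨Finset.mem_univ _, hh⟩)
    cases e₁ with
    | inl c =>
        simp only [Sum.elim_inl] at hnc
        obtain ⟨z, hz⟩ := hm c
        have hCv : Cval Ml Mu δ m = (z : ℝ) + 1/2 - Ml c := by
          rw [← hv]; simp [sval, Lb, hnc, hz]
        have hMlc : Ml c = ((z - zA : ℤ) : ℝ)
            + (Aval Ml Mu δ m h - Cval Ml Mu δ m) := by
          push_cast; rw [hzA] at *; linarith
        have hfr : Int.fract (Ml c) = Aval Ml Mu δ m h - Cval Ml Mu δ m := by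
          rw [hMlc, Int.fract_intCast_add,
            Int.fract_eq_self.mpr ⟨le_of_lt hs₀pos, hs₀1⟩]
        exact hkL c (fun hh => hnc hh) (by rw [hfr]; exact hs₀pos)
          (by rw [hfr]; exact hs₀κ)
    | inr c =>
        simp only [Sum.elim_inr] at hnc
        obtain ⟨z, hz⟩ := hm c
        have hCv : Cval Ml Mu δ m = Mu c - ((z : ℝ) + 1/2) := by
          rw [← hv]; simp [sval, Ub, hnc, hz]
        have hMuc : Mu c = ((z + zA + 1 : ℤ) : ℝ)
            + (-(Aval Ml Mu δ m h - Cval Ml Mu δ m)) := by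
          push_cast; rw [hzA] at *; linarith
        have hfr : Int.fract (Mu c) = 1 - (Aval Ml Mu δ m h - Cval Ml Mu δ m) := by
          rw [hMuc, Int.fract_intCast_add, Int.fract_neg, Int.fract_eq_self.mpr
            ⟨le_of_lt hs₀pos, hs₀1⟩]
          rw [Int.fract_eq_self.mpr ⟨le_of_lt hs₀pos, hs₀1⟩]
          exact ne_of_gt hs₀pos
        refine hkU c (fun hh => hnc hh) ?_ ?_
        · rw [hfr]; intro hh; linarith
        · rw [hfr]; linarith

end BF12
namespace BF12

open BoxFiltration Finset

variable {n : ℕ}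

lemma pweight_affine (hn : 1 ≤ n) {Ml Mu : Fin n → ℝ} {m : Fin n → ℝ}
    (hm : ∀ j, ∃ z : ℤ, m j = (z : ℝ) + 1/2)
    {δ κ : ℝ} (hδ0 : 0 < δ) (hκ1 : κ ≤ 1) (hδκ : δ < κ)
    (h : (mov Ml Mu δ).Nonempty)
    (hkL : ∀ c, Int.fract (Ml c) ≠ δ → 0 < Int.fract (Ml c) →
      Int.fract (Ml c) < κ → False)
    (hkU : ∀ c, Int.fract (Mu c) ≠ 1 - δ → Int.fract (Mu c) ≠ 0 →
      1 - Int.fract (Mu c) < κ → False) :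
    pweight (Lb Ml δ δ) (Ub Mu δ δ) m
      = (1 - δ/κ) * pweight (Lb Ml δ 0) (Ub Mu δ 0) m
        + (δ/κ) * pweight (Lb Ml δ κ) (Ub Mu δ κ) m := by
  have hκ0 : (0:ℝ) < κ := lt_trans hδ0 hδκ
  have htκ : δ/κ * κ = δ := div_mul_cancel₀ _ (ne_of_gt hκ0)
  rw [pweight_eq hn Ml Mu δ m h δ, pweight_eq hn Ml Mu δ m h 0,
    pweight_eq hn Ml Mu δ m h κ]
  rcases dicho hm hδ0 hκ1 hδκ h hkL hkU with hd | hd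
  · rw [min_eq_left (by linarith), min_eq_left (by linarith),
      min_eq_left (by linarith)]
    field_simp
    ring
  · rw [min_eq_right (by linarith), min_eq_right (by linarith),
      min_eq_right (by linarith)]
    field_simp
    ring

lemma width_affine {Ml Mu : Fin n → ℝ} {δ κ : ℝ} (hδ0 : 0 < δ) (hδκ : δ < κ) :
    width (Lb Ml δ δ) (Ub Mu δ δ)
      = (1 - δ/κ) * width (Lb Ml δ 0) (Ub Mu δ 0)
        + (δ/κ) * width (Lb Ml δ κ) (Ub Mu δ κ) := by
  have hκ0 : (0:ℝ) < κ := lt_trans hδ0 hδκ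
  have htκ : δ/κ * κ = δ := div_mul_cancel₀ _ (ne_of_gt hκ0)
  unfold width
  rw [Finset.mul_sum, Finset.mul_sum, ← Finset.sum_add_distrib]
  apply Finset.sum_congr rfl
  intro i _
  by_cases hL : Int.fract (Ml i) = δ <;> by_cases hU : Int.fract (Mu i) = 1 - δ <;>
    simp only [Lb, Ub, if_pos, if_neg, hL, hU, if_true, if_false] <;>
    field_simp <;> ring

end BF12
namespace BF12

open BoxFiltration Finset

lemma no_bad {n : ℕ} (hn : 1 ≤ n) (X : Finset (Fin n → ℝ))
    (l u : Fin n → ℝ) (hV : IsBox l u)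
    (hintl : ∀ i, ∃ z : ℤ, l i = (z : ℝ)) (hintu : ∀ i, ∃ z : ℤ, u i = (z : ℝ))
    (α : ℝ) (N : Set (Fin n → ℝ)) (Ml Mu : Fin n → ℝ)
    (hM : LargestPOptSol α l u X N Ml Mu) (i₀ : Fin n)
    (h0 : (Int.fract (Ml i₀) ≠ 0 ∧ Int.fract (Ml i₀) ≤ 1/2)
      ∨ 1/2 ≤ Int.fract (Mu i₀)) :
    False := by
  classical
  set bs : Finset ℝ :=
    ((Finset.univ.filter fun i => Int.fract (Ml i) ≠ 0 ∧ Int.fract (Ml i) ≤ 1/2).image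
        fun i => Int.fract (Ml i)) ∪
      ((Finset.univ.filter fun i => 1/2 ≤ Int.fract (Mu i)).image
        fun i => 1 - Int.fract (Mu i)) with hbs
  have hne : bs.Nonempty := by
    rcases h0 with h0 | h0
    · exact ⟨Int.fract (Ml i₀), Finset.mem_union_left _
        (Finset.mem_image_of_mem _ (Finset.mem_filter.mpr ⟨Finset.mem_univ _, h0⟩))⟩
    · exact ⟨1 - Int.fract (Mu i₀), Finset.mem_union_right _
        (Finset.mem_image_of_mem _ (Finset.mem_filter.mpr ⟨Finset.mem_univ _, h0⟩))⟩
  have hbs_elt : ∀ x ∈ bs, 0 < x ∧ x ≤ 1/2 := by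
    intro x hx
    rcases Finset.mem_union.mp hx with hx | hx
    · obtain ⟨i, hi, rfl⟩ := Finset.mem_image.mp hx
      have := (Finset.mem_filter.mp hi).2
      exact ⟨lt_of_le_of_ne (Int.fract_nonneg _) (Ne.symm this.1), this.2⟩
    · obtain ⟨i, hi, rfl⟩ := Finset.mem_image.mp hx
      have h1 := (Finset.mem_filter.mp hi).2
      have h2 := Int.fract_lt_one (Mu i)
      constructor <;> linarith
  set δ : ℝ := bs.min' hne with hδdef
  have hδmem : δ ∈ bs := bs.min'_mem hne
  have hδ : 0 < δ ∧ δ ≤ 1/2 := hbs_elt _ hδmem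
  -- candidate breakpoints
  set cand : Finset ℝ := insert (1:ℝ)
    ((Finset.univ.image fun i =>
        if Int.fract (Ml i) = 0 then 1 else Int.fract (Ml i)) ∪
      (Finset.univ.image fun i =>
        if Int.fract (Mu i) = 0 then 1 else 1 - Int.fract (Mu i))) with hcand
  set fcand : Finset ℝ := cand.filter (fun x => δ < x) with hfcand
  have h1f : (1:ℝ) ∈ fcand :=
    Finset.mem_filter.mpr ⟨Finset.mem_insert_self _ _, by linarith [hδ.2]⟩
  set κ : ℝ := fcand.min' ⟨1, h1f⟩ with hκdef
  have hδκ : δ < κ := (Finset.mem_filter.mp (fcand.min'_mem ⟨1, h1f⟩)).2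
  have hκ1 : κ ≤ 1 := fcand.min'_le _ h1f
  have hκ0 : (0:ℝ) < κ := lt_trans hδ.1 hδκ
  -- moving sides nonempty
  have hmov : (mov Ml Mu δ).Nonempty := by
    rcases Finset.mem_union.mp hδmem with hx | hx
    · obtain ⟨i, _, hi2⟩ := Finset.mem_image.mp hx
      exact ⟨Sum.inl i, Finset.mem_filter.mpr ⟨Finset.mem_univ _, hi2⟩⟩
    · obtain ⟨i, _, hi2⟩ := Finset.mem_image.mp hx
      refine ⟨Sum.inr i, Finset.mem_filter.mpr ⟨Finset.mem_univ _, ?_⟩⟩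
      simp only [Sum.elim_inr]
      linarith
  -- the two kink-exclusion properties
  have hkL : ∀ c, Int.fract (Ml c) ≠ δ → 0 < Int.fract (Ml c) →
      Int.fract (Ml c) < κ → False := by
    intro c hne0 hpos hlt
    by_cases hgt : δ < Int.fract (Ml c)
    · have hmem : Int.fract (Ml c) ∈ fcand := by
        refine Finset.mem_filter.mpr ⟨?_, hgt⟩
        refine Finset.mem_insert_of_mem (Finset.mem_union_left _ ?_)
        refine Finset.mem_image.mpr ⟨c, Finset.mem_univ _, ?_⟩
        rw [if_neg (ne_of_gt hpos)]
      exact absurd (fcand.min'_le _ hmem) (not_le.mpr hlt)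
    · push_neg at hgt
      have hmem : Int.fract (Ml c) ∈ bs := by
        refine Finset.mem_union_left _ (Finset.mem_image_of_mem _
          (Finset.mem_filter.mpr ⟨Finset.mem_univ _,
            ⟨ne_of_gt hpos, le_trans hgt hδ.2⟩⟩))
      exact hne0 (le_antisymm hgt (bs.min'_le _ hmem))
  have hkU : ∀ c, Int.fract (Mu c) ≠ 1 - δ → Int.fract (Mu c) ≠ 0 →
      1 - Int.fract (Mu c) < κ → False := by
    intro c hne1 hne0 hlt
    by_cases hgt : δ < 1 - Int.fract (Mu c)
    · have hmem : 1 - Int.fract (Mu c) ∈ fcand := by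
        refine Finset.mem_filter.mpr ⟨?_, hgt⟩
        refine Finset.mem_insert_of_mem (Finset.mem_union_right _ ?_)
        refine Finset.mem_image.mpr ⟨c, Finset.mem_univ _, ?_⟩
        rw [if_neg hne0]
      exact absurd (fcand.min'_le _ hmem) (not_le.mpr hlt)
    · push_neg at hgt
      have hmem : 1 - Int.fract (Mu c) ∈ bs := by
        refine Finset.mem_union_right _ (Finset.mem_image_of_mem _
          (Finset.mem_filter.mpr ⟨Finset.mem_univ _, by linarith [hδ.2]⟩))
      have : δ ≤ 1 - Int.fract (Mu c) := bs.min'_le _ hmem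
      exact hne1 (by linarith [le_antisymm hgt this])
  -- box structure of M
  have hIs : IsBox Ml Mu := hM.1.1
  have hBLE : BoxLE l u Ml Mu := hM.1.2.1
  have hmin := hM.1.2.2
  -- feasibility of deformed boxes
  have hfeas : ∀ s, 0 ≤ s → s ≤ 1 → BoxLE l u (Lb Ml δ s) (Ub Mu δ s) := by
    intro s hs0 hs1 i
    constructor
    · by_cases hL : Int.fract (Ml i) = δ
      · obtain ⟨z, hz⟩ := hintl i
        have hfl := Int.floor_add_fract (Ml i)
        have hlt : ⌊Ml i⌋ < z := by
          by_contra hge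
          push_neg at hge
          have h2 : (z:ℝ) ≤ (⌊Ml i⌋:ℝ) := by exact_mod_cast hge
          have h3 : Ml i ≤ (z:ℝ) := hz ▸ (hBLE i).1
          rw [hL] at hfl
          linarith [hδ.1]
        have h4 : (⌊Ml i⌋:ℝ) + 1 ≤ (z:ℝ) := by
          exact_mod_cast Int.add_one_le_iff.mpr hlt
        simp only [Lb, if_pos hL]
        rw [hz]
        linarith
      · simp only [Lb, if_neg hL]
        exact (hBLE i).1
    · by_cases hU : Int.fract (Mu i) = 1 - δ
      · obtain ⟨z, hz⟩ := hintu i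
        have hne0 : Int.fract (Mu i) ≠ 0 := by rw [hU]; intro hh; linarith [hδ.2]
        have hzlt : (z:ℝ) < Mu i := by
          refine lt_of_le_of_ne (hz ▸ (hBLE i).2) ?_
          intro heq
          rw [← heq] at hne0
          exact hne0 (Int.fract_intCast z)
        have h5 : z < ⌈Mu i⌉ := Int.lt_ceil.mpr hzlt
        have h6 : (z:ℝ) + 1 ≤ (⌈Mu i⌉:ℝ) := by
          exact_mod_cast Int.add_one_le_iff.mpr h5
        simp only [Ub, if_pos hU]
        rw [hz]
        linarith
      · simp only [Ub, if_neg hU]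
        exact (hBLE i).2
  have hIs' : ∀ s, 0 ≤ s → s ≤ 1 → IsBox (Lb Ml δ s) (Ub Mu δ s) :=
    fun s h0' h1' i => le_trans ((hfeas s h0' h1' i).1)
      (le_trans (hV i) ((hfeas s h0' h1' i).2))
  -- the deformed box at s = δ is M itself
  have hLδ : Lb Ml δ δ = Ml := by
    funext i
    by_cases hL : Int.fract (Ml i) = δ
    · simp only [Lb, if_pos hL]; rw [← hL]; exact Int.floor_add_fract _
    · simp only [Lb, if_neg hL]
  have hUδ : Ub Mu δ δ = Mu := by
    funext i
    by_cases hU : Int.fract (Mu i) = 1 - δ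
    · simp only [Ub, if_pos hU]
      have hne0 : Int.fract (Mu i) ≠ 0 := by rw [hU]; intro hh; linarith [hδ.2]
      have := Int.ceil_eq_add_one_sub_fract hne0
      rw [this, hU]; ring
    · simp only [Ub, if_neg hU]
  -- pcost comparisons
  have h0le : pcost α Ml Mu X N ≤ pcost α (Lb Ml δ 0) (Ub Mu δ 0) X N :=
    hmin _ _ (hIs' 0 le_rfl (by linarith)) (hfeas 0 le_rfl (by linarith))
  have hκle : pcost α Ml Mu X N ≤ pcost α (Lb Ml δ κ) (Ub Mu δ κ) X N :=
    hmin _ _ (hIs' κ (le_of_lt hκ0) hκ1) (hfeas κ (le_of_lt hκ0) hκ1)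
  have hstrict : pcost α Ml Mu X N < pcost α (Lb Ml δ 0) (Ub Mu δ 0) X N := by
    refine lt_of_le_of_ne h0le ?_
    intro heq
    have hopt0 : POptSol α l u X N (Lb Ml δ 0) (Ub Mu δ 0) :=
      ⟨hIs' 0 le_rfl (by linarith), hfeas 0 le_rfl (by linarith),
        fun l'' u'' h1 h2 => heq ▸ hmin l'' u'' h1 h2⟩
    have hble0 := hM.2 _ _ hopt0
    obtain ⟨e, he⟩ := hmov
    have hc := (Finset.mem_filter.mp he).2
    cases e with
    | inl i =>
        simp only [Sum.elim_inl] at hc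
        have h7 : Ml i ≤ Lb Ml δ 0 i := (hble0 i).1
        have hfl := Int.floor_add_fract (Ml i)
        rw [hc] at hfl
        simp only [Lb, if_pos hc] at h7
        linarith [hδ.1]
    | inr i =>
        simp only [Sum.elim_inr] at hc
        have h7 : Ub Mu δ 0 i ≤ Mu i := (hble0 i).2
        have hne0 : Int.fract (Mu i) ≠ 0 := by rw [hc]; intro hh; linarith [hδ.2]
        have hce := Int.ceil_eq_add_one_sub_fract hne0
        rw [hc] at hce
        simp only [Ub, if_pos hc] at h7
        rw [hce] at h7
        linarith [hδ.1]
  -- the affine identity for the cost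
  have hsum : ∑ k ∈ Theta X N, (theta X k : ℝ) * pweight Ml Mu (centroid k)
      = (1 - δ/κ) * (∑ k ∈ Theta X N,
          (theta X k : ℝ) * pweight (Lb Ml δ 0) (Ub Mu δ 0) (centroid k))
        + (δ/κ) * (∑ k ∈ Theta X N,
          (theta X k : ℝ) * pweight (Lb Ml δ κ) (Ub Mu δ κ) (centroid k)) := by
    rw [Finset.mul_sum, Finset.mul_sum, ← Finset.sum_add_distrib]
    apply Finset.sum_congr rfl
    intro k _
    have hmk : ∀ j, ∃ z : ℤ, centroid k j = (z:ℝ) + 1/2 := fun j => ⟨k j, rfl⟩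
    have haff := pweight_affine hn hmk hδ.1 hκ1 hδκ hmov hkL hkU
    rw [hLδ, hUδ] at haff
    rw [haff]
    ring
  have hw : width Ml Mu
      = (1 - δ/κ) * width (Lb Ml δ 0) (Ub Mu δ 0)
        + (δ/κ) * width (Lb Ml δ κ) (Ub Mu δ κ) := by
    have := width_affine (Ml := Ml) (Mu := Mu) hδ.1 hδκ
    rwa [hLδ, hUδ] at this
  have hpc : pcost α Ml Mu X N
      = (1 - δ/κ) * pcost α (Lb Ml δ 0) (Ub Mu δ 0) X N
        + (δ/κ) * pcost α (Lb Ml δ κ) (Ub Mu δ κ) X N := by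
    simp only [pcost]
    rw [hsum, hw]
    ring
  have ht0 : 0 < δ/κ := div_pos hδ.1 hκ0
  have ht1 : δ/κ < 1 := (div_lt_one hκ0).mpr hδκ
  nlinarith [hstrict, hκle, hpc, ht0, ht1,
    mul_pos (show (0:ℝ) < 1 - δ/κ by linarith)
      (sub_pos.mpr hstrict),
    mul_nonneg (le_of_lt ht0) (sub_nonneg.mpr hκle)]

end BF12

open BoxFiltration

/-- a largest pixel-optimal solution `M̄ ∈ s̄ol_α(V, B(V, π))` (for `V` with
integer endpoints and integer `π ≥ 1`) contains every unit pixel whose centroid lies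
in `M̄`. -/
theorem largest_pixel_optimal_whole_pixels
    (n : ℕ) (hn : 1 ≤ n) (X : Finset (Fin n → ℝ))
    (l u : Fin n → ℝ) (hV : IsBox l u)
    (hintl : ∀ i, ∃ z : ℤ, l i = (z : ℝ)) (hintu : ∀ i, ∃ z : ℤ, u i = (z : ℝ))
    (π : ℕ) (hπ : 1 ≤ π) (α : ℝ) (hα0 : 0 ≤ α) (hα1 : α ≤ 1)
    (Ml Mu : Fin n → ℝ)
    (hM : LargestPOptSol α l u X (nbhd l u (π : ℝ)) Ml Mu) :
    ∀ k : Fin n → ℤ, centroid k ∈ boxSet Ml Mu →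
      closedPixelSet k ⊆ boxSet Ml Mu := by
  intro k hk
  have hgoodL : ∀ i, Int.fract (Ml i) = 0 ∨ 1/2 < Int.fract (Ml i) := by
    intro i
    by_contra hcon
    push_neg at hcon
    exact BF12.no_bad hn X l u hV hintl hintu α _ Ml Mu hM i
      (Or.inl ⟨hcon.1, hcon.2⟩)
  have hgoodU : ∀ i, Int.fract (Mu i) < 1/2 := by
    intro i
    by_contra hcon
    exact BF12.no_bad hn X l u hV hintl hintu α _ Ml Mu hM i
      (Or.inr (not_lt.mp hcon))
  have hk' : ∀ i, Ml i ≤ (k i : ℝ) + 1/2 ∧ (k i : ℝ) + 1/2 ≤ Mu i := hk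
  have hlo : ∀ i, Ml i ≤ (k i : ℝ) := by
    intro i
    have hfl := Int.floor_add_fract (Ml i)
    have h2 := (hk' i).1
    rcases hgoodL i with h | h
    · have h1 : Ml i = (⌊Ml i⌋ : ℝ) := by rw [h] at hfl; linarith
      have h3 : ⌊Ml i⌋ ≤ k i := by
        by_contra hge
        push_neg at hge
        have h4 : ((k i : ℝ) + 1 : ℝ) ≤ (⌊Ml i⌋ : ℝ) := by
          exact_mod_cast Int.add_one_le_iff.mpr hge
        rw [h1] at h2
        linarith
      rw [h1]
      exact_mod_cast h3
    · have hflt : (⌊Ml i⌋:ℝ) < (k i : ℝ) := by linarith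
      have h5 : ⌊Ml i⌋ + 1 ≤ k i :=
        Int.add_one_le_iff.mpr (by exact_mod_cast hflt)
      have h6 : ((⌊Ml i⌋:ℝ) + 1) ≤ (k i:ℝ) := by exact_mod_cast h5
      have hfr1 : Int.fract (Ml i) < 1 := Int.fract_lt_one _
      linarith
  have hhi : ∀ i, (k i : ℝ) + 1 ≤ Mu i := by
    intro i
    have hfl := Int.floor_add_fract (Mu i)
    have h := hgoodU i
    have h2 := (hk' i).2
    have hklt : (k i : ℝ) < (⌊Mu i⌋ : ℝ) := by linarith
    have h5 : k i + 1 ≤ ⌊Mu i⌋ :=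
      Int.add_one_le_iff.mpr (by exact_mod_cast hklt)
    have h3 : ((k i:ℝ) + 1) ≤ (⌊Mu i⌋:ℝ) := by exact_mod_cast h5
    have h4 := Int.fract_nonneg (Mu i)
    linarith
  intro x hx i
  exact ⟨le_trans (hlo i) (hx i).1, le_trans (hx i).2 (hhi i)⟩
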